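/- arXiv:1709.01024 — 6 statements merged into one kernel-verified Lean document; each statement's English description precedes it below -/
import Mathlib

section
/- Suppose θ' ≿_{s'} θ'', and suppose it is not the case that s' is rationally strictly dominant for both θ' and θ'', and not the case that s' is rationally strictly dominated for both θ' and θ''. Then θ'' ≿_{s'} θ' fails. -/
open scoped Classical
open Finset Filter

noncomputable section

/-- `p` is a probability distribution on the finite type `X`. -/
def IsDist {X : Type*} [Fintype X] (p : X → ℝ) : Prop :=
  (∀ x, 0 ≤ p x) ∧ ∑ x, p x = 1

variable {Θ S A : Type*} [Fintype Θ] [Fintype S] [Fintype A]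

/-- Sender's expected payoff `u₁(θ, s, π₂(·|s))` from signal `s` when the receiver plays `π₂`. -/
def u1R (u₁ : Θ → S → A → ℝ) (π₂ : S → A → ℝ) (θ : Θ) (s : S) : ℝ :=
  ∑ a, π₂ s a * u₁ θ s a

/-- Receiver's expected payoff of action `a` after signal `s` under belief `p`. -/
def expU2 (u₂ : Θ → S → A → ℝ) (p : Θ → ℝ) (s : S) (a : A) : ℝ :=
  ∑ θ, p θ * u₂ θ s a

/-- `BR(p, s)`: pure best responses to belief `p` after signal `s`. -/
def BRb (u₂ : Θ → S → A → ℝ) (p : Θ → ℝ) (s : S) : Set A :=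
  {a | ∀ a', expU2 u₂ p s a' ≤ expU2 u₂ p s a}

/-- `A_s^BR`: actions that best respond to some belief after `s`. -/
def ABR (u₂ : Θ → S → A → ℝ) (s : S) : Set A :=
  {a | ∃ p, IsDist p ∧ a ∈ BRb u₂ p s}

/-- Membership in `Π₂•`: a receiver behavior strategy supported on `A_s^BR` after every `s`. -/
def Rational2 (u₂ : Θ → S → A → ℝ) (π₂ : S → A → ℝ) : Prop :=
  (∀ s, IsDist (π₂ s)) ∧ ∀ s a, π₂ s a ≠ 0 → a ∈ ABR u₂ s

/-- `u₁(θ,s,π₂(·|s)) ≥ max_{s' ≠ s} u₁(θ,s',π₂(·|s'))`. -/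
def WeakBest (u₁ : Θ → S → A → ℝ) (π₂ : S → A → ℝ) (θ : Θ) (s : S) : Prop :=
  ∀ s', s' ≠ s → u1R u₁ π₂ θ s' ≤ u1R u₁ π₂ θ s

/-- `u₁(θ,s,π₂(·|s)) > max_{s' ≠ s} u₁(θ,s',π₂(·|s'))`. -/
def StrictBest (u₁ : Θ → S → A → ℝ) (π₂ : S → A → ℝ) (θ : Θ) (s : S) : Prop :=
  ∀ s', s' ≠ s → u1R u₁ π₂ θ s' < u1R u₁ π₂ θ s

/-- `θ' ≿_s θ''`: `s` is more rationally-compatible with `θ'` than with `θ''`. -/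
def MoreCompat (u₁ u₂ : Θ → S → A → ℝ) (s : S) (θ' θ'' : Θ) : Prop :=
  ∀ π₂, Rational2 u₂ π₂ → WeakBest u₁ π₂ θ'' s → StrictBest u₁ π₂ θ' s

/-- `s` maximizes `s' ↦ u₁(θ, s', π₂(·|s'))`. -/
def GlobalBest (u₁ : Θ → S → A → ℝ) (π₂ : S → A → ℝ) (θ : Θ) (s : S) : Prop :=
  ∀ s', u1R u₁ π₂ θ s' ≤ u1R u₁ π₂ θ s

/-- `S_θ`: signals that best respond to some (not necessarily rational) receiver strategy. -/
def Sθ (u₁ : Θ → S → A → ℝ) (θ : Θ) : Set S :=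
  {s | ∃ π₂ : S → A → ℝ, (∀ s', IsDist (π₂ s')) ∧ GlobalBest u₁ π₂ θ s}

/-- `Θ_s`: types for which `s` is not dominated. -/
def Θtypes (u₁ : Θ → S → A → ℝ) (s : S) : Set Θ := {θ | s ∈ Sθ u₁ θ}

/-- Membership in `Π₁•`. -/
def Rational1 (u₁ : Θ → S → A → ℝ) (π₁ : Θ → S → ℝ) : Prop :=
  (∀ θ, IsDist (π₁ θ)) ∧ ∀ θ s, π₁ θ s ≠ 0 → s ∈ Sθ u₁ θ

/-- Nash equilibrium of the signaling game. -/
def NashEq (lam : Θ → ℝ) (u₁ u₂ : Θ → S → A → ℝ)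
    (π₁ : Θ → S → ℝ) (π₂ : S → A → ℝ) : Prop :=
  (∀ θ, IsDist (π₁ θ)) ∧ (∀ s, IsDist (π₂ s)) ∧
  (∀ θ s, π₁ θ s ≠ 0 → GlobalBest u₁ π₂ θ s) ∧
  (∀ s, (∃ θ, π₁ θ s ≠ 0) → ∀ a, π₂ s a ≠ 0 →
    ∀ a', ∑ θ, lam θ * π₁ θ s * u₂ θ s a' ≤ ∑ θ, lam θ * π₁ θ s * u₂ θ s a)

/-- Equilibrium expected payoff `E_π[u₁ | θ]`. -/
def eqPayoff (u₁ : Θ → S → A → ℝ) (π₁ : Θ → S → ℝ) (π₂ : S → A → ℝ) (θ : Θ) : ℝ :=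
  ∑ s, π₁ θ s * u1R u₁ π₂ θ s

/-- `s` is off the path of play of `π₁`. -/
def OffPath (π₁ : Θ → S → ℝ) (s : S) : Prop := ∀ θ, π₁ θ s = 0

/-- `J̃(s, π)`: types for which some best response to `s` weakly improves on the equilibrium. -/
def Jt (u₁ u₂ : Θ → S → A → ℝ) (π₁ : Θ → S → ℝ) (π₂ : S → A → ℝ) (s : S) : Set Θ :=
  {θ | ∃ a ∈ ABR u₂ s, eqPayoff u₁ π₁ π₂ θ ≤ u₁ θ s a}

/-- The odds-ratio condition defining `P_{θ'▷θ''}`. -/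
def OddsLe (lam : Θ → ℝ) (θ' θ'' : Θ) (p : Θ → ℝ) : Prop :=
  p θ'' * lam θ' ≤ lam θ'' * p θ'

/-- `Δ(T)`: beliefs supported on `T`. -/
def DeltaOn {Θ : Type*} [Fintype Θ] (T : Set Θ) : Set (Θ → ℝ) :=
  {p | IsDist p ∧ ∀ θ ∉ T, p θ = 0}

/-- `P̃(s, π)`: rationality-compatible beliefs at profile `π`. -/
def Pt (lam : Θ → ℝ) (u₁ u₂ : Θ → S → A → ℝ) (π₁ : Θ → S → ℝ) (π₂ : S → A → ℝ)
    (s : S) : Set (Θ → ℝ) :=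
  if (Jt u₁ u₂ π₁ π₂ s).Nonempty then
    DeltaOn (Jt u₁ u₂ π₁ π₂ s) ∩
      {p | ∀ θ' θ'', MoreCompat u₁ u₂ s θ' θ'' → OddsLe lam θ' θ'' p}
  else DeltaOn (Θtypes u₁ s)

/-- Rationality-compatible equilibrium. -/
def RCE (lam : Θ → ℝ) (u₁ u₂ : Θ → S → A → ℝ)
    (π₁ : Θ → S → ℝ) (π₂ : S → A → ℝ) : Prop :=
  NashEq lam u₁ u₂ π₁ π₂ ∧
  ∀ s a, π₂ s a ≠ 0 → ∃ p ∈ Pt lam u₁ u₂ π₁ π₂ s, a ∈ BRb u₂ p s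

/-- `P̂(s)`: uniformly rationality-compatible beliefs. -/
def Ph (lam : Θ → ℝ) (u₁ u₂ : Θ → S → A → ℝ) (s : S) : Set (Θ → ℝ) :=
  DeltaOn (Θtypes u₁ s) ∩
    {p | ∀ θ' θ'', MoreCompat u₁ u₂ s θ' θ'' → OddsLe lam θ' θ'' p}

/-- Uniform rationality-compatible equilibrium. -/
def URCE (lam : Θ → ℝ) (u₁ u₂ : Θ → S → A → ℝ)
    (π₁ : Θ → S → ℝ) (π₂ : S → A → ℝ) : Prop :=
  NashEq lam u₁ u₂ π₁ π₂ ∧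
  ∀ θ s, OffPath π₁ s → ∀ a, (∃ p ∈ Ph lam u₁ u₂ s, a ∈ BRb u₂ p s) →
    u₁ θ s a ≤ eqPayoff u₁ π₁ π₂ θ

/-- Receiver's expected payoff of a mixed action `α` after `s` under belief `p`. -/
def expU2m (u₂ : Θ → S → A → ℝ) (p : Θ → ℝ) (s : S) (α : A → ℝ) : ℝ :=
  ∑ θ, p θ * ∑ a, α a * u₂ θ s a

/-- `MBR(p, s)`: mixed best responses to belief `p` after `s`. -/
def MBRb (u₂ : Θ → S → A → ℝ) (p : Θ → ℝ) (s : S) : Set (A → ℝ) :=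
  {α | IsDist α ∧ ∀ α', IsDist α' → expU2m u₂ p s α' ≤ expU2m u₂ p s α}

/-- `MBR(s)`. -/
def MBR (u₂ : Θ → S → A → ℝ) (s : S) : Set (A → ℝ) :=
  {α | ∃ p, IsDist p ∧ α ∈ MBRb u₂ p s}

/-- `u₁(θ, s, α)` for a mixed action `α`. -/
def u1m (u₁ : Θ → S → A → ℝ) (θ : Θ) (s : S) (α : A → ℝ) : ℝ :=
  ∑ a, α a * u₁ θ s a

/-- `D(θ, s; π)`. -/
def Dset (u₁ u₂ : Θ → S → A → ℝ) (π₁ : Θ → S → ℝ) (π₂ : S → A → ℝ)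
    (θ : Θ) (s : S) : Set (A → ℝ) :=
  {α | α ∈ MBR u₂ s ∧ eqPayoff u₁ π₁ π₂ θ < u1m u₁ θ s α}

/-- `D°(θ, s; π)`. -/
def D0set (u₁ u₂ : Θ → S → A → ℝ) (π₁ : Θ → S → ℝ) (π₂ : S → A → ℝ)
    (θ : Θ) (s : S) : Set (A → ℝ) :=
  {α | α ∈ MBR u₂ s ∧ eqPayoff u₁ π₁ π₂ θ = u1m u₁ θ s α}

/-- `s` is rationally strictly dominant for `θ`. -/
def RSDominant (u₁ u₂ : Θ → S → A → ℝ) (θ : Θ) (s : S) : Prop :=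
  ∀ π₂, Rational2 u₂ π₂ → StrictBest u₁ π₂ θ s

/-- `s` is rationally strictly dominated for `θ`. -/
def RSDominated (u₁ u₂ : Θ → S → A → ℝ) (θ : Θ) (s : S) : Prop :=
  ∀ π₂, Rational2 u₂ π₂ → ∃ s', s' ≠ s ∧ u1R u₁ π₂ θ s < u1R u₁ π₂ θ s'

/-! If `≿_{s'}` held in both directions, then for every rational receiver strategy, weak optimality
of `s'` for `θ'` would force strict optimality. The non-degeneracy hypotheses supply one rational
strategy under which `s'` is strictly best for `θ'` and one under which it is not even weakly best.
Along the segment between them the advantage of `s'` over each other signal is affine, so by the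
intermediate value theorem some rational mixture makes `s'` weakly but not strictly best for `θ'`. -/

theorem exists_mem_Icc_forall_nonneg_and_exists_eq_zero {ι : Type*} {D : Finset ι}
    {g : ι → ℝ → ℝ} (hcont : ∀ i ∈ D, Continuous (g i)) (h0 : ∀ i ∈ D, 0 < g i 0)
    (h1 : ∃ i ∈ D, g i 1 < 0) :
    ∃ t ∈ Set.Icc (0 : ℝ) 1, (∀ i ∈ D, 0 ≤ g i t) ∧ ∃ i ∈ D, g i t = 0 := by
  obtain ⟨i₁, hi₁, hg₁⟩ := h1
  have hD : D.Nonempty := ⟨i₁, hi₁⟩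
  set F : ℝ → ℝ := fun t => D.inf' hD fun i => g i t
  have hF : Continuous F := Continuous.finset_inf'_apply hD hcont
  have hF0 : 0 < F 0 := (Finset.lt_inf'_iff _).2 h0
  have hF1 : F 1 < 0 := (Finset.inf'_le _ hi₁).trans_lt hg₁
  obtain ⟨t, ht, hFt⟩ :=
    intermediate_value_Icc' zero_le_one hF.continuousOn ⟨hF1.le, hF0.le⟩
  obtain ⟨i, hi, hgi⟩ := Finset.exists_mem_eq_inf' hD fun i => g i t
  exact ⟨t, ht, fun j hj => hFt ▸ Finset.inf'_le _ hj, i, hi, hgi ▸ hFt⟩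

variable {u₁ u₂ : Θ → S → A → ℝ} {π π' : S → A → ℝ} {θ : Θ} {s : S}

section

omit [Fintype Θ] [Fintype S]

theorem StrictBest.weakBest (h : StrictBest u₁ π θ s) : WeakBest u₁ π θ s :=
  fun s' hs' => (h s' hs').le

def mixStrategy (π π' : S → A → ℝ) (t : ℝ) : S → A → ℝ :=
  fun s a => (1 - t) * π s a + t * π' s a

theorem u1R_mixStrategy (t : ℝ) :
    u1R u₁ (mixStrategy π π' t) θ s = (1 - t) * u1R u₁ π θ s + t * u1R u₁ π' θ s := by
  simp only [u1R, mixStrategy, Finset.mul_sum, ← Finset.sum_add_distrib]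
  exact Finset.sum_congr rfl fun a _ => by ring

end

section

omit [Fintype S]

theorem Rational2.mixStrategy (hπ : Rational2 u₂ π) (hπ' : Rational2 u₂ π') {t : ℝ}
    (ht : t ∈ Set.Icc (0 : ℝ) 1) : Rational2 u₂ (mixStrategy π π' t) := by
  obtain ⟨ht0, ht1⟩ := ht
  refine ⟨fun s => ⟨fun a => ?_, ?_⟩, fun s a hne => ?_⟩
  · have := (hπ.1 s).1 a
    have := (hπ'.1 s).1 a
    have : 0 ≤ 1 - t := by linarith
    simp only [_root_.mixStrategy]
    positivity
  · simp only [_root_.mixStrategy, Finset.sum_add_distrib, ← Finset.mul_sum, (hπ.1 s).2,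
      (hπ'.1 s).2]
    ring
  · by_cases hπa : π s a = 0
    · refine hπ'.2 s a fun hπ'a => hne ?_
      simp only [_root_.mixStrategy, hπa, hπ'a, mul_zero, add_zero]
    · exact hπ.2 s a hπa

theorem not_rsDominated_iff :
    ¬ RSDominated u₁ u₂ θ s ↔ ∃ π, Rational2 u₂ π ∧ WeakBest u₁ π θ s := by
  simp [RSDominated, WeakBest]

theorem not_rsDominant_iff :
    ¬ RSDominant u₁ u₂ θ s ↔ ∃ π, Rational2 u₂ π ∧ ¬ StrictBest u₁ π θ s := by
  simp [RSDominant]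

end

theorem exists_rational2_weakBest_not_strictBest (hπ : Rational2 u₂ π)
    (hπs : StrictBest u₁ π θ s) (hπ' : Rational2 u₂ π') (hπ'w : ¬ WeakBest u₁ π' θ s) :
    ∃ σ, Rational2 u₂ σ ∧ WeakBest u₁ σ θ s ∧ ¬ StrictBest u₁ σ θ s := by
  set gap : S → ℝ → ℝ := fun r t =>
    u1R u₁ (mixStrategy π π' t) θ s - u1R u₁ (mixStrategy π π' t) θ r
  have hgap : ∀ r t, gap r t = (1 - t) * (u1R u₁ π θ s - u1R u₁ π θ r)
      + t * (u1R u₁ π' θ s - u1R u₁ π' θ r) := fun r t => by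
    simp only [gap, u1R_mixStrategy]
    ring
  have hcont : ∀ r ∈ univ.filter (· ≠ s), Continuous (gap r) := fun r _ =>
    (continuous_congr (hgap r)).2 (by fun_prop)
  have h0 : ∀ r ∈ univ.filter (· ≠ s), 0 < gap r 0 := fun r hr => by
    have := hπs r (mem_filter.1 hr).2
    rw [hgap]
    linarith
  have h1 : ∃ r ∈ univ.filter (· ≠ s), gap r 1 < 0 := by
    obtain ⟨r, hrs, hr⟩ : ∃ r, r ≠ s ∧ u1R u₁ π' θ s < u1R u₁ π' θ r := by
      simpa [WeakBest] using hπ'w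
    refine ⟨r, mem_filter.2 ⟨mem_univ r, hrs⟩, ?_⟩
    rw [hgap]
    linarith
  obtain ⟨t, ht, hnonneg, r, hr, hzero⟩ :=
    exists_mem_Icc_forall_nonneg_and_exists_eq_zero hcont h0 h1
  refine ⟨mixStrategy π π' t, hπ.mixStrategy hπ' ht, fun r' hr' => ?_, fun hstrict => ?_⟩
  · linarith [hnonneg r' (mem_filter.2 ⟨mem_univ r', hr'⟩)]
  · linarith [hstrict r (mem_filter.1 hr).2]

theorem moreCompat_asymm_general (u₁ u₂ : Θ → S → A → ℝ) (s' : S) (θ' θ'' : Θ)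
    (h : MoreCompat u₁ u₂ s' θ' θ'')
    (hnotdominant : ¬ (RSDominant u₁ u₂ θ' s' ∧ RSDominant u₁ u₂ θ'' s'))
    (hnotdominated : ¬ (RSDominated u₁ u₂ θ' s' ∧ RSDominated u₁ u₂ θ'' s')) :
    ¬ MoreCompat u₁ u₂ s' θ'' θ' := by
  intro h'
  have hclosed : ∀ π, Rational2 u₂ π → WeakBest u₁ π θ' s' → StrictBest u₁ π θ' s' :=
    fun π hπ hw => h π hπ (h' π hπ hw).weakBest
  obtain ⟨πg, hπg, hgood⟩ : ∃ π, Rational2 u₂ π ∧ StrictBest u₁ π θ' s' := by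
    rcases not_and_or.1 hnotdominated with hd | hd <;>
      obtain ⟨π, hπ, hw⟩ := not_rsDominated_iff.1 hd
    exacts [⟨π, hπ, hclosed π hπ hw⟩, ⟨π, hπ, h π hπ hw⟩]
  obtain ⟨πb, hπb, hbad⟩ : ∃ π, Rational2 u₂ π ∧ ¬ WeakBest u₁ π θ' s' := by
    rcases not_and_or.1 hnotdominant with hd | hd <;>
      obtain ⟨π, hπ, hns⟩ := not_rsDominant_iff.1 hd
    exacts [⟨π, hπ, mt (hclosed π hπ) hns⟩,
      ⟨π, hπ, fun hw => hns (h' π hπ (hclosed π hπ hw).weakBest)⟩]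
  obtain ⟨σ, hσ, hw, hns⟩ := exists_rational2_weakBest_not_strictBest hπg hgood hπb hbad
  exact hns (hclosed σ hσ hw)

/-- except in the two degenerate cases, `≿_{s'}` is asymmetric. -/
theorem moreCompat_asymm [Nonempty Θ] [Nonempty A] (hS : 1 < Fintype.card S)
    (lam : Θ → ℝ) (hpos : ∀ θ, 0 < lam θ) (hsum : ∑ θ, lam θ = 1)
    (u₁ u₂ : Θ → S → A → ℝ) (s' : S) (θ' θ'' : Θ)
    (h : MoreCompat u₁ u₂ s' θ' θ'')
    (hnotdominant : ¬ (RSDominant u₁ u₂ θ' s' ∧ RSDominant u₁ u₂ θ'' s'))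
    (hnotdominated : ¬ (RSDominated u₁ u₂ θ' s' ∧ RSDominated u₁ u₂ θ'' s')) :
    ¬ MoreCompat u₁ u₂ s' θ'' θ' :=
  moreCompat_asymm_general u₁ u₂ s' θ' θ'' h hnotdominant hnotdominated

end
end

section
/- Let π* be a uniform rationality-compatible equilibrium (uRCE), and assume P̃(s,π*) is nonempty for every off-path signal s. Then π* is path-equivalent to a rationality-compatible equilibrium (RCE): there exists an RCE π° with π₁° = π₁* and π₂°(·|s) = π₂*(·|s) for every on-path signal s. -/
open scoped Classical
open Finset Filter

noncomputable section

variable {Θ S A : Type*} [Fintype Θ] [Fintype S] [Fintype A]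

/-!
At on-path signals the receiver keeps playing best responses to the Bayesian posterior; at each
off-path signal `s` she switches to a pure best response to a belief in `P̃(s, π*)`. Equilibrium
payoffs do not change, so neither do `J̃` and `P̃`. No type gains by deviating to an off-path
signal: if `J̃(s, π*)` is nonempty the chosen belief lies in `P̂(s)` and the uRCE condition
applies, and otherwise no rational action beats any type's equilibrium payoff. The posterior at
an on-path signal lies in `P̃`: every sender of `s` belongs to `J̃`, and since the new receiver
strategy is rational, `θ' ≿_s θ''` forces `θ'` to send `s` at least as often as `θ''`.
-/

section Distributions

variable {X : Type*} [Fintype X] {w f : X → ℝ} {c : ℝ}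

theorem IsDist.exists_ne_zero (hw : IsDist w) : ∃ x, w x ≠ 0 := by
  by_contra! h
  simpa [h] using hw.2

theorem IsDist.le_one (hw : IsDist w) (x : X) : w x ≤ 1 :=
  hw.2 ▸ Finset.single_le_sum (fun y _ => hw.1 y) (mem_univ x)

theorem IsDist.single (x : X) : IsDist (Pi.single x (1 : ℝ)) :=
  ⟨fun y => by by_cases h : y = x <;> simp [h], by simp⟩

theorem IsDist.sum_mul_const (hw : IsDist w) (c : ℝ) : ∑ x, w x * c = c := by
  rw [← Finset.sum_mul, hw.2, one_mul]

theorem IsDist.mul_le_mul_of_ne_zero (hw : IsDist w) (h : ∀ x, w x ≠ 0 → f x ≤ c) (x : X) :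
    w x * f x ≤ w x * c := by
  rcases eq_or_ne (w x) 0 with hx | hx
  · simp [hx]
  · exact mul_le_mul_of_nonneg_left (h x hx) (hw.1 x)

theorem IsDist.sum_mul_le (hw : IsDist w) (h : ∀ x, w x ≠ 0 → f x ≤ c) :
    ∑ x, w x * f x ≤ c :=
  calc ∑ x, w x * f x ≤ ∑ x, w x * c := sum_le_sum fun x _ => hw.mul_le_mul_of_ne_zero h x
    _ = c := hw.sum_mul_const c

theorem IsDist.le_sum_mul (hw : IsDist w) (h : ∀ x, w x ≠ 0 → c ≤ f x) :
    c ≤ ∑ x, w x * f x := by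
  have := hw.sum_mul_le (f := fun x => -f x) (c := -c) fun x hx => neg_le_neg (h x hx)
  simpa [mul_neg, sum_neg_distrib] using this

theorem IsDist.exists_le_of_le_sum_mul (hw : IsDist w) (h : c ≤ ∑ x, w x * f x) :
    ∃ x, w x ≠ 0 ∧ c ≤ f x := by
  by_contra! hlt
  obtain ⟨x₀, hx₀⟩ := hw.exists_ne_zero
  have : ∑ x, w x * f x < ∑ x, w x * c :=
    sum_lt_sum (fun x _ => hw.mul_le_mul_of_ne_zero (fun x hx => (hlt x hx).le) x)
      ⟨x₀, mem_univ _, mul_lt_mul_of_pos_left (hlt x₀ hx₀) ((hw.1 x₀).lt_of_ne' hx₀)⟩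
  linarith [hw.sum_mul_const c]

end Distributions

section SignalingGame

variable {lam : Θ → ℝ} {u₁ u₂ : Θ → S → A → ℝ} {π₁ : Θ → S → ℝ} {π₂ : S → A → ℝ}
  {θ θ' θ'' : Θ} {s : S} {a : A} {p : Θ → ℝ}

omit [Fintype Θ] [Fintype S] in
theorem u1R_of_eq_single (h : π₂ s = Pi.single a 1) (θ : Θ) : u1R u₁ π₂ θ s = u₁ θ s a := by
  simp [u1R, h, Pi.single_apply, ite_mul]

omit [Fintype S] in
theorem exists_mem_BRb [Nonempty A] (u₂ : Θ → S → A → ℝ) (p : Θ → ℝ) (s : S) :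
    ∃ a, a ∈ BRb u₂ p s :=
  Finite.exists_max (expU2 u₂ p s)

theorem isDist_of_mem_Pt (hp : p ∈ Pt lam u₁ u₂ π₁ π₂ s) : IsDist p := by
  unfold Pt at hp
  split_ifs at hp
  exacts [hp.1.1, hp.1]

namespace NashEq

theorem u1R_le_eqPayoff (h : NashEq lam u₁ u₂ π₁ π₂) (θ : Θ) (s : S) :
    u1R u₁ π₂ θ s ≤ eqPayoff u₁ π₁ π₂ θ :=
  (h.1 θ).le_sum_mul fun t ht => h.2.2.1 θ t ht s

theorem eqPayoff_eq_u1R (h : NashEq lam u₁ u₂ π₁ π₂) (hs : π₁ θ s ≠ 0) :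
    eqPayoff u₁ π₁ π₂ θ = u1R u₁ π₂ θ s :=
  le_antisymm ((h.1 θ).sum_mul_le fun t _ => h.2.2.1 θ s hs t) (h.u1R_le_eqPayoff θ s)

theorem Jt_subset_Θtypes (h : NashEq lam u₁ u₂ π₁ π₂) (s : S) :
    Jt u₁ u₂ π₁ π₂ s ⊆ Θtypes u₁ s := by
  rintro θ ⟨a, -, ha⟩
  refine ⟨Function.update π₂ s (Pi.single a 1), fun t => ?_, fun t => ?_⟩
  · rcases eq_or_ne t s with rfl | ht
    · simpa using IsDist.single a
    · simpa [ht] using h.2.1 t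
  · have hs : u1R u₁ (Function.update π₂ s (Pi.single a 1)) θ s = u₁ θ s a :=
      u1R_of_eq_single (by simp) θ
    rcases eq_or_ne t s with rfl | ht
    · exact le_rfl
    · rw [hs]
      calc u1R u₁ (Function.update π₂ s (Pi.single a 1)) θ t = u1R u₁ π₂ θ t := by
            simp [u1R, ht]
        _ ≤ eqPayoff u₁ π₁ π₂ θ := h.u1R_le_eqPayoff θ t
        _ ≤ u₁ θ s a := ha

theorem mem_Ph_of_mem_Pt (h : NashEq lam u₁ u₂ π₁ π₂) (hJ : (Jt u₁ u₂ π₁ π₂ s).Nonempty)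
    (hp : p ∈ Pt lam u₁ u₂ π₁ π₂ s) : p ∈ Ph lam u₁ u₂ s := by
  rw [Pt, if_pos hJ] at hp
  exact ⟨⟨hp.1.1, fun θ hθ => hp.1.2 θ fun hJθ => hθ (h.Jt_subset_Θtypes s hJθ)⟩, hp.2⟩

end NashEq

def posterior (lam : Θ → ℝ) (π₁ : Θ → S → ℝ) (s : S) : Θ → ℝ :=
  fun θ => lam θ * π₁ θ s / ∑ θ', lam θ' * π₁ θ' s

omit [Fintype S] in
theorem posterior_eq_zero (h : π₁ θ s = 0) : posterior lam π₁ s θ = 0 := by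
  simp [posterior, h]

omit [Fintype S] [Fintype A] in
theorem expU2_posterior (u₂ : Θ → S → A → ℝ) (a : A) :
    expU2 u₂ (posterior lam π₁ s) s a = (∑ θ, lam θ * π₁ θ s * u₂ θ s a) / ∑ θ, lam θ * π₁ θ s := by
  simp only [expU2, posterior, sum_div]
  exact sum_congr rfl fun θ _ => by ring

theorem isDist_posterior (hpos : ∀ θ, 0 < lam θ) (hπ₁ : ∀ θ, IsDist (π₁ θ)) (hs : π₁ θ s ≠ 0) :
    IsDist (posterior lam π₁ s) := by
  have hZ : 0 < ∑ θ, lam θ * π₁ θ s :=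
    sum_pos' (fun θ _ => mul_nonneg (hpos θ).le ((hπ₁ θ).1 s))
      ⟨θ, mem_univ _, mul_pos (hpos θ) (((hπ₁ θ).1 s).lt_of_ne' hs)⟩
  refine ⟨fun θ => div_nonneg (mul_nonneg (hpos θ).le ((hπ₁ θ).1 s)) hZ.le, ?_⟩
  simp only [posterior, ← sum_div, div_self hZ.ne']

theorem oddsLe_posterior (hlam : ∀ θ, 0 ≤ lam θ) (hπ₁ : ∀ θ, IsDist (π₁ θ))
    (h : π₁ θ'' s ≤ π₁ θ' s) : OddsLe lam θ' θ'' (posterior lam π₁ s) := by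
  have hZ : 0 ≤ ∑ θ, lam θ * π₁ θ s := sum_nonneg fun θ _ => mul_nonneg (hlam θ) ((hπ₁ θ).1 s)
  simp only [OddsLe, posterior, div_mul_eq_mul_div, mul_div_assoc']
  refine div_le_div_of_nonneg_right ?_ hZ
  nlinarith [mul_le_mul_of_nonneg_left h (mul_nonneg (hlam θ'') (hlam θ'))]

namespace NashEq

theorem mem_BRb_posterior (hlam : ∀ θ, 0 ≤ lam θ) (h : NashEq lam u₁ u₂ π₁ π₂)
    (hs : π₁ θ s ≠ 0) (ha : π₂ s a ≠ 0) : a ∈ BRb u₂ (posterior lam π₁ s) s := by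
  intro a'
  rw [expU2_posterior, expU2_posterior]
  exact div_le_div_of_nonneg_right (h.2.2.2 s ⟨θ, hs⟩ a ha a')
    (sum_nonneg fun θ _ => mul_nonneg (hlam θ) ((h.1 θ).1 s))

theorem mem_ABR (hpos : ∀ θ, 0 < lam θ) (h : NashEq lam u₁ u₂ π₁ π₂) (hs : π₁ θ s ≠ 0)
    (ha : π₂ s a ≠ 0) : a ∈ ABR u₂ s :=
  ⟨_, isDist_posterior hpos h.1 hs, h.mem_BRb_posterior (fun θ => (hpos θ).le) hs ha⟩

theorem mem_Jt (hpos : ∀ θ, 0 < lam θ) (h : NashEq lam u₁ u₂ π₁ π₂) (hs : π₁ θ s ≠ 0) :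
    θ ∈ Jt u₁ u₂ π₁ π₂ s := by
  obtain ⟨a, ha, hle⟩ := (h.2.1 s).exists_le_of_le_sum_mul (h.eqPayoff_eq_u1R hs).le
  exact ⟨a, h.mem_ABR hpos hs ha, hle⟩

theorem le_of_moreCompat (h : NashEq lam u₁ u₂ π₁ π₂) (hr : Rational2 u₂ π₂)
    (hc : MoreCompat u₁ u₂ s θ' θ'') : π₁ θ'' s ≤ π₁ θ' s := by
  rcases eq_or_ne (π₁ θ'' s) 0 with h0 | h0
  · exact h0 ▸ (h.1 θ').1 s
  -- `s` is optimal for `θ''`, hence strictly optimal for `θ'`, who therefore sends only `s`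
  have hstrict := hc π₂ hr fun t _ => h.2.2.1 θ'' s h0 t
  have hother : ∀ t ≠ s, π₁ θ' t = 0 := fun t ht =>
    by_contra fun hne => (h.2.2.1 θ' t hne s).not_gt (hstrict t ht)
  have hone : π₁ θ' s = 1 := by simpa [Fintype.sum_eq_single s hother] using (h.1 θ').2
  exact hone ▸ (h.1 θ'').le_one s

theorem posterior_mem_Pt (hpos : ∀ θ, 0 < lam θ) (h : NashEq lam u₁ u₂ π₁ π₂)
    (hr : Rational2 u₂ π₂) (hs : π₁ θ s ≠ 0) : posterior lam π₁ s ∈ Pt lam u₁ u₂ π₁ π₂ s := by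
  rw [Pt, if_pos ⟨θ, h.mem_Jt hpos hs⟩]
  refine ⟨⟨isDist_posterior hpos h.1 hs, fun θ hθ => posterior_eq_zero ?_⟩,
    fun θ' θ'' hc => oddsLe_posterior (fun θ => (hpos θ).le) h.1 (h.le_of_moreCompat hr hc)⟩
  by_contra hne
  exact hθ (h.mem_Jt hpos hne)

end NashEq

def replaceOffPath (π₁ : Θ → S → ℝ) (π₂ : S → A → ℝ) (b : S → A) : S → A → ℝ :=
  fun s => if OffPath π₁ s then Pi.single (b s) 1 else π₂ s

section ReplaceOffPath

variable {b : S → A}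

omit [Fintype Θ] [Fintype S] [Fintype A] in
theorem replaceOffPath_of_offPath (hs : OffPath π₁ s) :
    replaceOffPath π₁ π₂ b s = Pi.single (b s) 1 :=
  if_pos hs

omit [Fintype Θ] [Fintype S] [Fintype A] in
theorem replaceOffPath_of_not_offPath (hs : ¬ OffPath π₁ s) : replaceOffPath π₁ π₂ b s = π₂ s :=
  if_neg hs

omit [Fintype Θ] [Fintype S] [Fintype A] in
theorem eq_of_replaceOffPath_ne_zero (hs : OffPath π₁ s) (ha : replaceOffPath π₁ π₂ b s a ≠ 0) :
    a = b s := by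
  by_contra hne
  simp [replaceOffPath_of_offPath hs, hne] at ha

omit [Fintype Θ] in
theorem eqPayoff_replaceOffPath :
    eqPayoff u₁ π₁ (replaceOffPath π₁ π₂ b) = eqPayoff u₁ π₁ π₂ := by
  funext θ
  refine sum_congr rfl fun s _ => ?_
  rcases eq_or_ne (π₁ θ s) 0 with h0 | h0
  · simp [h0]
  · simp only [u1R, replaceOffPath_of_not_offPath fun hs => h0 (hs θ)]

theorem Pt_replaceOffPath :
    Pt lam u₁ u₂ π₁ (replaceOffPath π₁ π₂ b) = Pt lam u₁ u₂ π₁ π₂ := by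
  unfold Pt Jt
  rw [eqPayoff_replaceOffPath]

variable (hb : ∀ s, OffPath π₁ s → ∃ p ∈ Pt lam u₁ u₂ π₁ π₂ s, b s ∈ BRb u₂ p s)
include hb

theorem URCE.u1R_replaceOffPath_le (h : URCE lam u₁ u₂ π₁ π₂) (θ : Θ) (s : S) :
    u1R u₁ (replaceOffPath π₁ π₂ b) θ s ≤ eqPayoff u₁ π₁ π₂ θ := by
  by_cases hs : OffPath π₁ s
  · obtain ⟨p, hp, hbs⟩ := hb s hs
    rw [u1R_of_eq_single (replaceOffPath_of_offPath hs)]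
    by_cases hJ : (Jt u₁ u₂ π₁ π₂ s).Nonempty
    · exact h.2 θ s hs (b s) ⟨p, h.1.mem_Ph_of_mem_Pt hJ hp, hbs⟩
    · rw [Pt, if_neg hJ] at hp
      by_contra! hlt
      exact hJ ⟨θ, b s, ⟨p, hp.1, hbs⟩, hlt.le⟩
  · simp only [u1R, replaceOffPath_of_not_offPath hs]
    exact h.1.u1R_le_eqPayoff θ s

theorem URCE.nashEq_replaceOffPath (h : URCE lam u₁ u₂ π₁ π₂) :
    NashEq lam u₁ u₂ π₁ (replaceOffPath π₁ π₂ b) := by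
  obtain ⟨hπ₁, hπ₂, -, hreceiver⟩ := h.1
  refine ⟨hπ₁, fun s => ?_, fun θ t ht s => ?_, fun s hs a ha => ?_⟩
  · by_cases hs : OffPath π₁ s
    · simpa only [replaceOffPath_of_offPath hs] using IsDist.single (b s)
    · simpa only [replaceOffPath_of_not_offPath hs] using hπ₂ s
  · have ht' : ¬ OffPath π₁ t := fun hoff => ht (hoff θ)
    calc u1R u₁ (replaceOffPath π₁ π₂ b) θ s ≤ eqPayoff u₁ π₁ π₂ θ :=
          h.u1R_replaceOffPath_le hb θ s
      _ = u1R u₁ (replaceOffPath π₁ π₂ b) θ t := by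
          simp only [h.1.eqPayoff_eq_u1R ht, u1R, replaceOffPath_of_not_offPath ht']
  · have hs' : ¬ OffPath π₁ s := fun hoff => hs.elim fun θ hθ => hθ (hoff θ)
    rw [replaceOffPath_of_not_offPath hs'] at ha
    exact hreceiver s hs a ha

theorem URCE.rational2_replaceOffPath (hpos : ∀ θ, 0 < lam θ) (h : URCE lam u₁ u₂ π₁ π₂) :
    Rational2 u₂ (replaceOffPath π₁ π₂ b) := by
  refine ⟨(h.nashEq_replaceOffPath hb).2.1, fun s a ha => ?_⟩
  by_cases hs : OffPath π₁ s
  · obtain ⟨p, hp, hbs⟩ := hb s hs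
    exact eq_of_replaceOffPath_ne_zero hs ha ▸ ⟨p, isDist_of_mem_Pt hp, hbs⟩
  · obtain ⟨θ, hθ⟩ := not_forall.mp hs
    rw [replaceOffPath_of_not_offPath hs] at ha
    exact h.1.mem_ABR hpos hθ ha

theorem URCE.rce_replaceOffPath (hpos : ∀ θ, 0 < lam θ) (h : URCE lam u₁ u₂ π₁ π₂) :
    RCE lam u₁ u₂ π₁ (replaceOffPath π₁ π₂ b) := by
  have hN := h.nashEq_replaceOffPath hb
  refine ⟨hN, fun s a ha => ?_⟩
  by_cases hs : OffPath π₁ s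
  · rw [Pt_replaceOffPath, eq_of_replaceOffPath_ne_zero hs ha]
    exact hb s hs
  · obtain ⟨θ, hθ⟩ := not_forall.mp hs
    exact ⟨_, hN.posterior_mem_Pt hpos (h.rational2_replaceOffPath hb hpos) hθ,
      hN.mem_BRb_posterior (fun θ => (hpos θ).le) hθ ha⟩

end ReplaceOffPath

end SignalingGame

theorem uRCE_pathEquivalent_RCE_general
    (lam : Θ → ℝ) (hpos : ∀ θ, 0 < lam θ)
    (u₁ u₂ : Θ → S → A → ℝ) (π₁ : Θ → S → ℝ) (π₂ : S → A → ℝ)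
    (h : URCE lam u₁ u₂ π₁ π₂)
    (hne : ∀ s, OffPath π₁ s → (Pt lam u₁ u₂ π₁ π₂ s).Nonempty) :
    ∃ π₂' : S → A → ℝ,
      RCE lam u₁ u₂ π₁ π₂' ∧
      ∀ s, (∃ θ, π₁ θ s ≠ 0) → π₂' s = π₂ s := by
  have hb : ∀ s, ∃ a, OffPath π₁ s → ∃ p ∈ Pt lam u₁ u₂ π₁ π₂ s, a ∈ BRb u₂ p s := by
    intro s
    obtain ⟨a₀, -⟩ := (h.1.2.1 s).exists_ne_zero
    have : Nonempty A := ⟨a₀⟩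
    by_cases hs : OffPath π₁ s
    · obtain ⟨p, hp⟩ := hne s hs
      obtain ⟨a, ha⟩ := exists_mem_BRb u₂ p s
      exact ⟨a, fun _ => ⟨p, hp, ha⟩⟩
    · exact ⟨a₀, fun hoff => absurd hoff hs⟩
  choose b hb using hb
  exact ⟨replaceOffPath π₁ π₂ b, h.rce_replaceOffPath hb hpos,
    fun s ⟨θ, hθ⟩ => replaceOffPath_of_not_offPath fun hoff => hθ (hoff θ)⟩

/-- every uRCE (with `P̃(s,π*)` nonempty at every off-path signal) is
path-equivalent to an RCE. -/
theorem uRCE_pathEquivalent_RCE [Nonempty Θ] [Nonempty A] (hS : 1 < Fintype.card S)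
    (lam : Θ → ℝ) (hpos : ∀ θ, 0 < lam θ) (hsum : ∑ θ, lam θ = 1)
    (u₁ u₂ : Θ → S → A → ℝ) (π₁ : Θ → S → ℝ) (π₂ : S → A → ℝ)
    (h : URCE lam u₁ u₂ π₁ π₂)
    (hne : ∀ s, OffPath π₁ s → (Pt lam u₁ u₂ π₁ π₂ s).Nonempty) :
    ∃ π₂' : S → A → ℝ,
      RCE lam u₁ u₂ π₁ π₂' ∧
      ∀ s, (∃ θ, π₁ θ s ≠ 0) → π₂' s = π₂ s :=
  uRCE_pathEquivalent_RCE_general lam hpos u₁ u₂ π₁ π₂ h hne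
end
end

section
/- Suppose θ' ≿_s θ''. Let π₁ be a sender behavior strategy with π₁(s|θ'') > 0 and π₁(s|θ') < 1. Then for every π₂ ∈ Π₂•, π₁ is not an ex-ante best response to π₂: there exists a sender behavior strategy π₁' with ∑_θ λ(θ)·∑_{s'} π₁'(s'|θ)·u₁(θ,s',π₂(·|s')) > ∑_θ λ(θ)·∑_{s'} π₁(s'|θ)·u₁(θ,s',π₂(·|s')). -/
open scoped Classical
open Finset Filter

noncomputable section

variable {Θ S A : Type*} [Fintype Θ] [Fintype S] [Fintype A]

theorem IsDist.exists_ne_pos_of_lt_one {X : Type*} [Fintype X] {q : X → ℝ} (hq : IsDist q)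
    {x : X} (hx : q x < 1) : ∃ y ≠ x, 0 < q y := by
  by_contra! hzero
  have hsupp : ∑ y, q y = q x :=
    Finset.sum_eq_single x (fun y _ hy => le_antisymm (hzero y hy) (hq.1 y)) (by simp)
  linarith [hq.2]

theorem IsDist.sum_mul_lt_of_pos_of_lt {X : Type*} [Fintype X] {q f : X → ℝ} (hq : IsDist q)
    {x₀ x : X} (hmax : ∀ y, f y ≤ f x₀) (hx : 0 < q x) (hlt : f x < f x₀) :
    ∑ y, q y * f y < f x₀ :=
  calc ∑ y, q y * f y < ∑ y, q y * f x₀ :=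
        Finset.sum_lt_sum (fun y _ => mul_le_mul_of_nonneg_left (hmax y) (hq.1 y))
          ⟨x, Finset.mem_univ x, mul_lt_mul_of_pos_left hlt hx⟩
    _ = f x₀ := by rw [← Finset.sum_mul, hq.2, one_mul]

theorem isDist_pi_single {X : Type*} [Fintype X] [DecidableEq X] (x : X) :
    IsDist (Pi.single x (1 : ℝ)) :=
  ⟨fun y => by by_cases h : y = x <;> simp [h], by simp⟩

theorem exists_exAnte_improvement_of_eqPayoff_lt (lam : Θ → ℝ) (hlam : ∀ θ, 0 < lam θ)
    (u₁ : Θ → S → A → ℝ) {π₁ : Θ → S → ℝ} (hπ₁ : ∀ θ, IsDist (π₁ θ)) (π₂ : S → A → ℝ)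
    {θ₀ : Θ} {s₀ : S} (h : eqPayoff u₁ π₁ π₂ θ₀ < u1R u₁ π₂ θ₀ s₀) :
    ∃ π₁' : Θ → S → ℝ, (∀ θ, IsDist (π₁' θ)) ∧
      ∑ θ, lam θ * eqPayoff u₁ π₁ π₂ θ < ∑ θ, lam θ * eqPayoff u₁ π₁' π₂ θ := by
  have hpure : eqPayoff u₁ (Function.update π₁ θ₀ (Pi.single s₀ 1)) π₂ θ₀ = u1R u₁ π₂ θ₀ s₀ := by
    simp [eqPayoff, Pi.single_apply, ite_mul]
  refine ⟨Function.update π₁ θ₀ (Pi.single s₀ 1), fun θ => ?_, ?_⟩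
  · rcases eq_or_ne θ θ₀ with rfl | hθ
    · simpa using isDist_pi_single s₀
    · simpa [Function.update_of_ne hθ] using hπ₁ θ
  · refine Finset.sum_lt_sum (fun θ _ => ?_) ⟨θ₀, Finset.mem_univ θ₀, ?_⟩
    · rcases eq_or_ne θ θ₀ with rfl | hθ
      · rw [hpure]
        exact mul_le_mul_of_nonneg_left h.le (hlam θ).le
      · simp [eqPayoff, Function.update_of_ne hθ]
    · rw [hpure]
      exact mul_lt_mul_of_pos_left h (hlam θ₀)

theorem compat_strict_dominance_general
    (lam : Θ → ℝ) (hpos : ∀ θ, 0 < lam θ)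
    (u₁ u₂ : Θ → S → A → ℝ) (s : S) (θ' θ'' : Θ)
    (hc : MoreCompat u₁ u₂ s θ' θ'')
    (π₁ : Θ → S → ℝ) (hπ₁ : ∀ θ, IsDist (π₁ θ))
    (hpos'' : 0 < π₁ θ'' s) (hlt' : π₁ θ' s < 1)
    (π₂ : S → A → ℝ) (hπ₂ : Rational2 u₂ π₂) :
    ∃ π₁' : Θ → S → ℝ, (∀ θ, IsDist (π₁' θ)) ∧
      ∑ θ, lam θ * ∑ s', π₁ θ s' * u1R u₁ π₂ θ s'
        < ∑ θ, lam θ * ∑ s', π₁' θ s' * u1R u₁ π₂ θ s' := by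
  by_cases hweak : WeakBest u₁ π₂ θ'' s
  · -- `θ'` strictly prefers `s` but plays some other signal with positive probability
    have hstrict : StrictBest u₁ π₂ θ' s := hc π₂ hπ₂ hweak
    obtain ⟨s'', hne, hs''⟩ := (hπ₁ θ').exists_ne_pos_of_lt_one hlt'
    have hmax : ∀ s', u1R u₁ π₂ θ' s' ≤ u1R u₁ π₂ θ' s := fun s' => by
      rcases eq_or_ne s' s with rfl | h
      · exact le_rfl
      · exact (hstrict s' h).le
    exact exists_exAnte_improvement_of_eqPayoff_lt lam hpos u₁ hπ₁ π₂
      ((hπ₁ θ').sum_mul_lt_of_pos_of_lt hmax hs'' (hstrict s'' hne))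
  · -- `θ''` plays `s` with positive probability although some signal is strictly better
    obtain ⟨s₁, -, hs₁⟩ : ∃ s₁, s₁ ≠ s ∧ u1R u₁ π₂ θ'' s < u1R u₁ π₂ θ'' s₁ := by
      simpa [WeakBest] using hweak
    have : Nonempty S := ⟨s⟩
    obtain ⟨s₀, hmax⟩ := Finite.exists_max (u1R u₁ π₂ θ'')
    exact exists_exAnte_improvement_of_eqPayoff_lt lam hpos u₁ hπ₁ π₂
      ((hπ₁ θ'').sum_mul_lt_of_pos_of_lt hmax hpos'' (hs₁.trans_le (hmax s₁)))

/-- if `θ' ≿_s θ''`, any sender strategy playing `s` as `θ''` with positive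
probability but not playing `s` surely as `θ'` is not an ex-ante best response to any
`π₂ ∈ Π₂•`. -/
theorem compat_strict_dominance [Nonempty Θ] [Nonempty A] (hS : 1 < Fintype.card S)
    (lam : Θ → ℝ) (hpos : ∀ θ, 0 < lam θ) (hsum : ∑ θ, lam θ = 1)
    (u₁ u₂ : Θ → S → A → ℝ) (s : S) (θ' θ'' : Θ)
    (hc : MoreCompat u₁ u₂ s θ' θ'')
    (π₁ : Θ → S → ℝ) (hπ₁ : ∀ θ, IsDist (π₁ θ))
    (hpos'' : 0 < π₁ θ'' s) (hlt' : π₁ θ' s < 1)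
    (π₂ : S → A → ℝ) (hπ₂ : Rational2 u₂ π₂) :
    ∃ π₁' : Θ → S → ℝ, (∀ θ, IsDist (π₁' θ)) ∧
      ∑ θ, lam θ * ∑ s', π₁ θ s' * u1R u₁ π₂ θ s'
        < ∑ θ, lam θ * ∑ s', π₁' θ s' * u1R u₁ π₂ θ s' :=
  compat_strict_dominance_general lam hpos u₁ u₂ s θ' θ'' hc π₁ hπ₁ hpos'' hlt' π₂ hπ₂

end
end

section
/- Every rationality-compatible equilibrium (RCE) passes the Intuitive Criterion: if π* is an RCE, then there exist no type θ and signal s' with J̃(s',π*) ≠ ∅ and E_π*[u₁|θ] < min_{a ∈ BR(Δ(J̃(s',π*)), s')} u₁(θ,s',a). -/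
/-!
When `J̃(s', π*)` is nonempty, the RCE receiver answers `s'` only with best responses to
beliefs on `J̃(s', π*)`. If every such response gave type `θ` more than its equilibrium payoff,
so would the receiver's mixed answer to `s'`, and `θ` would profitably deviate to `s'`.
-/

open scoped Classical
open Finset Filter

noncomputable section

variable {Θ S A : Type*} [Fintype Θ] [Fintype S] [Fintype A]

section

variable {X : Type*} [Fintype X] {w f : X → ℝ} {c : ℝ}

theorem IsDist.lt_sum_mul (hw : IsDist w) (h : ∀ x, w x ≠ 0 → c < f x) : c < ∑ x, w x * f x := by
  have hpos : ∀ x, w x ≠ 0 → 0 < w x := fun x hx => (hw.1 x).lt_of_ne' hx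
  obtain ⟨x₀, hx₀⟩ := hw.exists_ne_zero
  calc c = ∑ x, w x * c := by rw [← sum_mul, hw.2, one_mul]
    _ < ∑ x, w x * f x := by
      refine sum_lt_sum (fun x _ => ?_) ⟨x₀, mem_univ _, mul_lt_mul_of_pos_left (h x₀ hx₀)
        (hpos x₀ hx₀)⟩
      rcases eq_or_ne (w x) 0 with hx | hx
      · simp [hx]
      · exact (mul_lt_mul_of_pos_left (h x hx) (hpos x hx)).le

end

section

variable {lam : Θ → ℝ} {u₁ u₂ : Θ → S → A → ℝ} {π₁ : Θ → S → ℝ} {π₂ : S → A → ℝ}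

theorem NashEq.u1R_le_eqPayoff_s5 (h : NashEq lam u₁ u₂ π₁ π₂) (θ : Θ) (s : S) :
    u1R u₁ π₂ θ s ≤ eqPayoff u₁ π₁ π₂ θ :=
  (h.1 θ).le_sum_mul fun s' hs' => h.2.2.1 θ s' hs' s

theorem Pt_subset_DeltaOn_Jt {s : S} (hJ : (Jt u₁ u₂ π₁ π₂ s).Nonempty) :
    Pt lam u₁ u₂ π₁ π₂ s ⊆ DeltaOn (Jt u₁ u₂ π₁ π₂ s) := by
  rw [Pt, if_pos hJ]
  exact Set.inter_subset_left

theorem RCE.exists_DeltaOn_Jt_of_ne_zero (h : RCE lam u₁ u₂ π₁ π₂) {s : S} {a : A}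
    (hJ : (Jt u₁ u₂ π₁ π₂ s).Nonempty) (ha : π₂ s a ≠ 0) :
    ∃ p ∈ DeltaOn (Jt u₁ u₂ π₁ π₂ s), a ∈ BRb u₂ p s := by
  obtain ⟨p, hp, hbr⟩ := h.2 s a ha
  exact ⟨p, Pt_subset_DeltaOn_Jt hJ hp, hbr⟩

end

theorem RCE_passes_IntuitiveCriterion_general
    (lam : Θ → ℝ)
    (u₁ u₂ : Θ → S → A → ℝ) (π₁ : Θ → S → ℝ) (π₂ : S → A → ℝ)
    (h : RCE lam u₁ u₂ π₁ π₂) :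
    ¬ ∃ (θ : Θ) (s' : S), (Jt u₁ u₂ π₁ π₂ s').Nonempty ∧
      ∀ a : A, (∃ p ∈ DeltaOn (Jt u₁ u₂ π₁ π₂ s'), a ∈ BRb u₂ p s') →
        eqPayoff u₁ π₁ π₂ θ < u₁ θ s' a := by
  rintro ⟨θ, s', hJ, hgain⟩
  have hdeviation : eqPayoff u₁ π₁ π₂ θ < u1R u₁ π₂ θ s' :=
    (h.1.2.1 s').lt_sum_mul fun a ha => hgain a (h.exists_DeltaOn_Jt_of_ne_zero hJ ha)
  exact (h.1.u1R_le_eqPayoff_s5 θ s').not_gt hdeviation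

/-- every RCE passes the Intuitive Criterion. -/
theorem RCE_passes_IntuitiveCriterion [Nonempty Θ] [Nonempty A] (hS : 1 < Fintype.card S)
    (lam : Θ → ℝ) (hpos : ∀ θ, 0 < lam θ) (hsum : ∑ θ, lam θ = 1)
    (u₁ u₂ : Θ → S → A → ℝ) (π₁ : Θ → S → ℝ) (π₂ : S → A → ℝ)
    (h : RCE lam u₁ u₂ π₁ π₂) :
    ¬ ∃ (θ : Θ) (s' : S), (Jt u₁ u₂ π₁ π₂ s').Nonempty ∧
      ∀ a : A, (∃ p ∈ DeltaOn (Jt u₁ u₂ π₁ π₂ s'), a ∈ BRb u₂ p s') →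
        eqPayoff u₁ π₁ π₂ θ < u₁ θ s' a :=
  RCE_passes_IntuitiveCriterion_general lam u₁ u₂ π₁ π₂ h

end
end

section
/- Let π* be a Nash equilibrium whose receiver strategy lies in Π₂•, let s be an on-path signal, and suppose θ' ≿_s θ''. Then: if π₁*(s|θ'') > 0 then π₁*(s|θ') = 1; in particular π₁*(s|θ'') ≤ π₁*(s|θ'), and the Bayesian posterior p(θ|s) := λ(θ)π₁*(s|θ) / ∑_{θ̂} λ(θ̂)π₁*(s|θ̂) satisfies p(θ''|s)·λ(θ') ≤ λ(θ'')·p(θ'|s), i.e. p(·|s) ∈ P_{θ'▷θ''}. -/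
open scoped Classical
open Finset Filter

noncomputable section

variable {Θ S A : Type*} [Fintype Θ] [Fintype S] [Fintype A]

/-!
If `θ''` sends `s` with positive probability in a Nash equilibrium, then `s` is a best reply of
`θ''` to the receiver strategy `π₂ ∈ Π₂•`; by `θ' ≿_s θ''` it is then a *strict* best reply of
`θ'`, so `θ'` sends no other signal and `π₁*(s|θ') = 1`. Hence `π₁*(s|θ'') ≤ π₁*(s|θ')`, and
multiplying by `λ(θ')λ(θ'')/∑_θ λ(θ)π₁*(s|θ)` gives the odds-ratio inequality for the posterior.
-/

theorem IsDist.le_one_s10 {X : Type*} [Fintype X] {p : X → ℝ} (hp : IsDist p) (x : X) :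
    p x ≤ 1 :=
  hp.2 ▸ single_le_sum (fun y _ => hp.1 y) (mem_univ x)

theorem IsDist.eq_one_of_forall_ne {X : Type*} [Fintype X] {p : X → ℝ} (hp : IsDist p)
    {x : X} (h : ∀ y, y ≠ x → p y = 0) : p x = 1 := by
  rw [← hp.2, sum_eq_single x (fun y _ hy => h y hy) (fun hx => absurd (mem_univ x) hx)]

section NashEq

variable {lam : Θ → ℝ} {u₁ u₂ : Θ → S → A → ℝ} {π₁ : Θ → S → ℝ} {π₂ : S → A → ℝ}

theorem NashEq.eq_one_of_strictBest (hN : NashEq lam u₁ u₂ π₁ π₂) {θ : Θ} {s : S}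
    (hs : StrictBest u₁ π₂ θ s) : π₁ θ s = 1 := by
  refine (hN.1 θ).eq_one_of_forall_ne fun s' hne => ?_
  by_contra hs'
  exact (hN.2.2.1 θ s' hs' s).not_gt (hs s' hne)

theorem NashEq.eq_one_of_moreCompat (hN : NashEq lam u₁ u₂ π₁ π₂) (hR : Rational2 u₂ π₂)
    {s : S} {θ' θ'' : Θ} (hc : MoreCompat u₁ u₂ s θ' θ'') (h'' : π₁ θ'' s ≠ 0) :
    π₁ θ' s = 1 :=
  hN.eq_one_of_strictBest (hc π₂ hR fun s' _ => hN.2.2.1 θ'' s h'' s')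

theorem NashEq.le_of_moreCompat_s10 (hN : NashEq lam u₁ u₂ π₁ π₂) (hR : Rational2 u₂ π₂)
    {s : S} {θ' θ'' : Θ} (hc : MoreCompat u₁ u₂ s θ' θ'') : π₁ θ'' s ≤ π₁ θ' s := by
  by_cases h'' : π₁ θ'' s = 0
  · exact h'' ▸ (hN.1 θ').1 s
  · exact hN.eq_one_of_moreCompat hR hc h'' ▸ (hN.1 θ'').le_one_s10 s

end NashEq

/-- Junk value `0` when `∑ t, lam t * ℓ t = 0`. -/
def bayesPosterior (lam ℓ : Θ → ℝ) (θ : Θ) : ℝ :=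
  lam θ * ℓ θ / ∑ t, lam t * ℓ t

theorem oddsLe_bayesPosterior_of_le {lam ℓ : Θ → ℝ} {θ' θ'' : Θ} (hlam : ∀ θ, 0 ≤ lam θ)
    (hℓ : ∀ θ, 0 ≤ ℓ θ) (hle : ℓ θ'' ≤ ℓ θ') : OddsLe lam θ' θ'' (bayesPosterior lam ℓ) := by
  have hZ : 0 ≤ ∑ t, lam t * ℓ t := sum_nonneg fun t _ => mul_nonneg (hlam t) (hℓ t)
  unfold OddsLe bayesPosterior
  rw [div_mul_eq_mul_div, mul_div_assoc']
  refine div_le_div_of_nonneg_right ?_ hZ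
  calc lam θ'' * ℓ θ'' * lam θ' = lam θ'' * lam θ' * ℓ θ'' := by ring
    _ ≤ lam θ'' * lam θ' * ℓ θ' := by gcongr; exact mul_nonneg (hlam θ'') (hlam θ')
    _ = lam θ'' * (lam θ' * ℓ θ') := by ring

theorem onpath_posterior_compatible_general
    (lam : Θ → ℝ) (hpos : ∀ θ, 0 < lam θ)
    (u₁ u₂ : Θ → S → A → ℝ) (π₁ : Θ → S → ℝ) (π₂ : S → A → ℝ)
    (hN : NashEq lam u₁ u₂ π₁ π₂) (hR : Rational2 u₂ π₂)
    (s : S)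
    (θ' θ'' : Θ) (hc : MoreCompat u₁ u₂ s θ' θ'') :
    (π₁ θ'' s ≠ 0 → π₁ θ' s = 1) ∧
    π₁ θ'' s ≤ π₁ θ' s ∧
    (lam θ'' * π₁ θ'' s / ∑ t, lam t * π₁ t s) * lam θ'
      ≤ lam θ'' * (lam θ' * π₁ θ' s / ∑ t, lam t * π₁ t s) := by
  have hle := hN.le_of_moreCompat_s10 hR hc
  exact ⟨hN.eq_one_of_moreCompat hR hc, hle,
    oddsLe_bayesPosterior_of_le (ℓ := fun θ => π₁ θ s) (fun θ => (hpos θ).le)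
      (fun θ => (hN.1 θ).1 s) hle⟩

/-- at a Nash equilibrium with rational receiver strategy, on-path signals
respect the rational compatibility order, and the Bayesian posterior lies in `P_{θ'▷θ''}`. -/
theorem onpath_posterior_compatible [Nonempty Θ] [Nonempty A] (hS : 1 < Fintype.card S)
    (lam : Θ → ℝ) (hpos : ∀ θ, 0 < lam θ) (hsum : ∑ θ, lam θ = 1)
    (u₁ u₂ : Θ → S → A → ℝ) (π₁ : Θ → S → ℝ) (π₂ : S → A → ℝ)
    (hN : NashEq lam u₁ u₂ π₁ π₂) (hR : Rational2 u₂ π₂)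
    (s : S) (hon : ∃ θ, π₁ θ s ≠ 0)
    (θ' θ'' : Θ) (hc : MoreCompat u₁ u₂ s θ' θ'') :
    (π₁ θ'' s ≠ 0 → π₁ θ' s = 1) ∧
    π₁ θ'' s ≤ π₁ θ' s ∧
    (lam θ'' * π₁ θ'' s / ∑ t, lam t * π₁ t s) * lam θ'
      ≤ lam θ'' * (lam θ' * π₁ θ' s / ∑ t, lam t * π₁ t s) :=
  onpath_posterior_compatible_general lam hpos u₁ u₂ π₁ π₂ hN hR s θ' θ'' hc

end
end

section
/- For ξ > 0 define P̂_ξ(s) := Δ(Θ_s) ∩ ⋂_{(θ',θ'') : θ'≿_s θ''} {p ∈ Δ(Θ) : p(θ'')·λ(θ') ≤ (1+ξ)·λ(θ'')·p(θ')}. Then there exists ξ > 0 such that for every signal s, BR(P̂_ξ(s), s) = BR(P̂(s), s). -/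
open scoped Classical
open Finset Filter

noncomputable section

variable {Θ S A : Type*} [Fintype Θ] [Fintype S] [Fintype A]

/-- The `ξ`-relaxation `P̂_ξ(s)` of the uniformly rationality-compatible beliefs `P̂(s)`. -/
def PhXi (lam : Θ → ℝ) (u₁ u₂ : Θ → S → A → ℝ) (ξ : ℝ) (s : S) : Set (Θ → ℝ) :=
  DeltaOn (Θtypes u₁ s) ∩
    {p | ∀ θ' θ'', MoreCompat u₁ u₂ s θ' θ'' →
      p θ'' * lam θ' ≤ (1 + ξ) * (lam θ'' * p θ')}

/-!
Fix `s` and an action `a ∉ BR(P̂(s), s)`. The beliefs in `P̂_ξ(s)` to which `a` is a best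
response form closed subsets of the compact simplex that shrink as `ξ ↓ 0`, and their
intersection lies in `P̂(s)`, hence is empty. So one of them is already empty, i.e.
`a ∉ BR(P̂_ξ(s), s)` for all small `ξ > 0`. With finitely many signals and actions a single
`ξ` works for all, and the reverse inclusion holds because `P̂(s) ⊆ P̂_ξ(s)`.
-/

open scoped Topology

/-- `BR(P, s)`. -/
def BRSet (u₂ : Θ → S → A → ℝ) (P : Set (Θ → ℝ)) (s : S) : Set A :=
  {a | ∃ p ∈ P, a ∈ BRb u₂ p s}

omit [Fintype S] [Fintype A] in
theorem BRSet_mono (u₂ : Θ → S → A → ℝ) {P Q : Set (Θ → ℝ)} (h : P ⊆ Q) (s : S) :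
    BRSet u₂ P s ⊆ BRSet u₂ Q s :=
  fun _ ⟨p, hp, hbr⟩ => ⟨p, h hp, hbr⟩

section PhXi

variable {lam : Θ → ℝ} {u₁ u₂ : Θ → S → A → ℝ}

omit [Fintype S] in
theorem PhXi_zero (s : S) : PhXi lam u₁ u₂ 0 s = Ph lam u₁ u₂ s := by
  simp only [PhXi, Ph, OddsLe, add_zero, one_mul]

omit [Fintype S] in
theorem PhXi_mono (hlam : ∀ θ, 0 ≤ lam θ) {ξ ξ' : ℝ} (h : ξ ≤ ξ') (s : S) :
    PhXi lam u₁ u₂ ξ s ⊆ PhXi lam u₁ u₂ ξ' s := by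
  rintro p ⟨hp, hodds⟩
  refine ⟨hp, fun θ' θ'' hc => (hodds θ' θ'' hc).trans ?_⟩
  have : 0 ≤ lam θ'' * p θ' := mul_nonneg (hlam θ'') (hp.1.1 θ')
  gcongr

omit [Fintype S] in
theorem Ph_subset_PhXi (hlam : ∀ θ, 0 ≤ lam θ) {ξ : ℝ} (hξ : 0 ≤ ξ) (s : S) :
    Ph lam u₁ u₂ s ⊆ PhXi lam u₁ u₂ ξ s :=
  PhXi_zero (lam := lam) (u₁ := u₁) (u₂ := u₂) s ▸ PhXi_mono hlam hξ s

omit [Fintype S] in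
theorem mem_Ph_of_forall_mem_PhXi {p : Θ → ℝ} {s : S}
    (h : ∀ ξ > 0, p ∈ PhXi lam u₁ u₂ ξ s) : p ∈ Ph lam u₁ u₂ s := by
  refine ⟨(h 1 one_pos).1, fun θ' θ'' hc => ?_⟩
  have hlim : Tendsto (fun ξ : ℝ => (1 + ξ) * (lam θ'' * p θ')) (𝓝[>] 0)
      (𝓝 (lam θ'' * p θ')) := by
    have hcont : Continuous fun ξ : ℝ => (1 + ξ) * (lam θ'' * p θ') := by fun_prop
    simpa using (hcont.tendsto 0).mono_left nhdsWithin_le_nhds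
  exact ge_of_tendsto hlim (eventually_nhdsWithin_of_forall fun ξ hξ => (h ξ hξ).2 θ' θ'' hc)

omit [Fintype S] in
theorem isClosed_PhXi (ξ : ℝ) (s : S) : IsClosed (PhXi lam u₁ u₂ ξ s) := by
  have hDelta : IsClosed (DeltaOn (Θtypes u₁ s)) := by
    simp only [DeltaOn, Set.ofPred_and, Set.ofPred_forall]
    exact (isClosed_stdSimplex ℝ Θ).inter <| isClosed_iInter fun θ => isClosed_iInter fun _ =>
      isClosed_eq (continuous_apply θ) continuous_const
  simp only [PhXi, Set.ofPred_forall]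
  exact hDelta.inter <| isClosed_iInter fun θ' => isClosed_iInter fun θ'' =>
    isClosed_iInter fun _ => isClosed_le (by fun_prop) (by fun_prop)

end PhXi

omit [Fintype S] [Fintype A] in
theorem isClosed_setOf_mem_BRb (u₂ : Θ → S → A → ℝ) (s : S) (a : A) :
    IsClosed {p : Θ → ℝ | a ∈ BRb u₂ p s} := by
  change IsClosed {p | ∀ a', expU2 u₂ p s a' ≤ expU2 u₂ p s a}
  simp only [expU2, Set.ofPred_forall]
  exact isClosed_iInter fun _ => isClosed_le (by fun_prop) (by fun_prop)

omit [Fintype S] in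
theorem eventually_BRSet_PhXi_subset {lam : Θ → ℝ} (hlam : ∀ θ, 0 ≤ lam θ)
    (u₁ u₂ : Θ → S → A → ℝ) (s : S) :
    ∀ᶠ ξ in 𝓝[>] 0, BRSet u₂ (PhXi lam u₁ u₂ ξ s) s ⊆ BRSet u₂ (Ph lam u₁ u₂ s) s := by
  suffices h : ∀ a, ∀ᶠ ξ in 𝓝[>] (0 : ℝ),
      a ∈ BRSet u₂ (PhXi lam u₁ u₂ ξ s) s → a ∈ BRSet u₂ (Ph lam u₁ u₂ s) s from
    (eventually_all.2 h).mono fun _ hξ a => hξ a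
  intro a
  by_cases ha : a ∈ BRSet u₂ (Ph lam u₁ u₂ s) s
  · exact .of_forall fun _ _ => ha
  let t : Set.Ioi (0 : ℝ) → Set (Θ → ℝ) := fun ξ =>
    PhXi lam u₁ u₂ ξ s ∩ {p | a ∈ BRb u₂ p s}
  have ht_mono : Monotone t := fun ξ ξ' h =>
    Set.inter_subset_inter_left _ (PhXi_mono hlam (Subtype.mono_coe _ h) s)
  have hempty : stdSimplex ℝ Θ ∩ ⋂ ξ, t ξ = ∅ := by
    refine Set.eq_empty_of_forall_notMem fun p ⟨_, hp⟩ => ha ?_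
    rw [Set.mem_iInter] at hp
    exact ⟨p, mem_Ph_of_forall_mem_PhXi fun ξ hξ => (hp ⟨ξ, hξ⟩).1,
      (hp ⟨1, Set.mem_Ioi.2 one_pos⟩).2⟩
  obtain ⟨⟨ξ₀, hξ₀⟩, hξ₀_empty⟩ := (isCompact_stdSimplex ℝ Θ).elim_directed_family_closed t
    (fun ξ => (isClosed_PhXi ξ s).inter (isClosed_setOf_mem_BRb u₂ s a)) hempty
    ht_mono.directed_ge
  filter_upwards [Ioc_mem_nhdsGT hξ₀] with ξ hξ
  rintro ⟨p, hp, hbr⟩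
  have hp₀ : p ∈ t ⟨ξ₀, hξ₀⟩ := ⟨PhXi_mono hlam hξ.2 s hp, hbr⟩
  exact (hξ₀_empty.subset ⟨hp.1.1, hp₀⟩).elim

theorem exists_xi_BR_PhXi_eq_BR_Ph_general
    (lam : Θ → ℝ) (hpos : ∀ θ, 0 < lam θ)
    (u₁ u₂ : Θ → S → A → ℝ) :
    ∃ ξ : ℝ, 0 < ξ ∧ ∀ s : S,
      {a | ∃ p ∈ PhXi lam u₁ u₂ ξ s, a ∈ BRb u₂ p s}
        = {a | ∃ p ∈ Ph lam u₁ u₂ s, a ∈ BRb u₂ p s} := by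
  have hlam : ∀ θ, 0 ≤ lam θ := fun θ => (hpos θ).le
  have hev : ∀ᶠ ξ in 𝓝[>] (0 : ℝ), ∀ s,
      BRSet u₂ (PhXi lam u₁ u₂ ξ s) s ⊆ BRSet u₂ (Ph lam u₁ u₂ s) s :=
    eventually_all.2 (eventually_BRSet_PhXi_subset hlam u₁ u₂)
  obtain ⟨ξ, hsub, hξ⟩ := (hev.and self_mem_nhdsWithin).exists
  exact ⟨ξ, hξ, fun s =>
    (hsub s).antisymm (BRSet_mono u₂ (Ph_subset_PhXi hlam (le_of_lt hξ) s) s)⟩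

/-- there exists `ξ > 0` such that for every signal `s`,
`BR(P̂_ξ(s), s) = BR(P̂(s), s)`. -/
theorem exists_xi_BR_PhXi_eq_BR_Ph [Nonempty Θ] [Nonempty A] (hS : 1 < Fintype.card S)
    (lam : Θ → ℝ) (hpos : ∀ θ, 0 < lam θ) (hsum : ∑ θ, lam θ = 1)
    (u₁ u₂ : Θ → S → A → ℝ) :
    ∃ ξ : ℝ, 0 < ξ ∧ ∀ s : S,
      {a | ∃ p ∈ PhXi lam u₁ u₂ ξ s, a ∈ BRb u₂ p s}
        = {a | ∃ p ∈ Ph lam u₁ u₂ s, a ∈ BRb u₂ p s} :=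
  exists_xi_BR_PhXi_eq_BR_Ph_general lam hpos u₁ u₂

end
end
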